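/- arXiv:2507.06367 — 8 statements merged into one kernel-verified Lean document; each statement's English description precedes it below -/
import Mathlib

section
/- Let H ≥ 1, C > 0, and δ₁, ..., δ_{H-1} ∈ ℝ. Then there exists exactly one tuple (β₁, ..., β_H) of positive real numbers satisfying β₁⋯β_H = C and β_{i+1} − β_i = δ_i for all i = 1, ..., H−1. -/
/-!
Summing the differences telescopically, a tuple with the prescribed differences is
`βᵢ = x + sᵢ`, where `sᵢ = δ₀ + ⋯ + δᵢ₋₁` and `x = β₀`. So only the single unknown `x` remains,
subject to `∏ᵢ (x + sᵢ) = C` with every factor positive. Past the point where the smallest factor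
vanishes, this product is continuous and strictly increasing from `0` to `∞`, so it takes the
value `C > 0` exactly once.
-/

open Finset Set

section ProdAdd

variable {ι : Type*} [Fintype ι] [Nonempty ι] (a : ι → ℝ)

lemma prod_add_lt_prod_add {x y : ℝ} (hx : ∀ i, 0 < x + a i) (hxy : x < y) :
    ∏ i, (x + a i) < ∏ i, (y + a i) :=
  prod_lt_prod_of_nonempty (fun i _ => hx i) (fun i _ => by linarith) univ_nonempty

lemma exists_prod_add_eq {C : ℝ} (hC : 0 < C) :
    ∃ x, (∀ i, 0 < x + a i) ∧ ∏ i, (x + a i) = C := by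
  obtain ⟨i₀, hi₀⟩ := Finite.exists_min a
  set f : ℝ → ℝ := fun x => ∏ i, (x + a i)
  have hf : Continuous f := by fun_prop
  have hf_bot : f (-a i₀) = 0 := prod_eq_zero (mem_univ i₀) (neg_add_cancel _)
  have hf_top : C < f (C + 1 - a i₀) :=
    calc C < C + 1 := by linarith
      _ ≤ (C + 1) ^ Fintype.card ι := le_self_pow₀ (by linarith) Fintype.card_ne_zero
      _ = ∏ _i : ι, (C + 1) := (prod_const _).symm
      _ ≤ f (C + 1 - a i₀) :=
        prod_le_prod (fun _ _ => by linarith) (fun i _ => by linarith [hi₀ i])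
  obtain ⟨x, hx, hfx⟩ := intermediate_value_Ioo (by linarith) hf.continuousOn
    (show C ∈ Ioo (f (-a i₀)) (f (C + 1 - a i₀)) from ⟨hf_bot ▸ hC, hf_top⟩)
  exact ⟨x, fun i => by linarith [hx.1, hi₀ i], hfx⟩

lemma existsUnique_prod_add_eq {C : ℝ} (hC : 0 < C) :
    ∃! x, (∀ i, 0 < x + a i) ∧ ∏ i, (x + a i) = C := by
  obtain ⟨x, hx⟩ := exists_prod_add_eq a hC
  refine ⟨x, hx, fun y hy => le_antisymm ?_ ?_⟩
  · refine not_lt.1 fun hxy => ?_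
    have := prod_add_lt_prod_add a hx.1 hxy
    linarith [hx.2, hy.2]
  · refine not_lt.1 fun hyx => ?_
    have := prod_add_lt_prod_add a hy.1 hyx
    linarith [hx.2, hy.2]

end ProdAdd

lemma Fin.eq_zero_add_sum_range_of_sub_eq {H : ℕ} {β : Fin H → ℝ} {δ : ℕ → ℝ}
    (hβ : ∀ i : ℕ, ∀ h : i + 1 < H, β ⟨i + 1, h⟩ - β ⟨i, Nat.lt_of_succ_lt h⟩ = δ i) (i : Fin H) :
    β i = β ⟨0, i.pos⟩ + ∑ j ∈ range i, δ j := by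
  obtain ⟨i, hi⟩ := i
  induction i with
  | zero => simp
  | succ n ih =>
    rw [sum_range_succ, ← add_assoc, ← ih (by omega), ← hβ n hi]
    ring

/-- For H ≥ 1, C > 0 and reals δ₁,...,δ_{H-1}, there is exactly one
tuple (β₁,...,β_H) of positive reals with β₁⋯β_H = C and β_{i+1} − β_i = δ_i. -/
theorem stmt_0 (H : ℕ) (hH : 1 ≤ H) (C : ℝ) (hC : 0 < C) (δ : ℕ → ℝ) :
    ∃! β : Fin H → ℝ,
      (∀ i, 0 < β i) ∧ (∏ i, β i = C) ∧
      (∀ i : ℕ, ∀ h : i + 1 < H, β ⟨i + 1, h⟩ - β ⟨i, by omega⟩ = δ i) := by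
  have : Nonempty (Fin H) := ⟨⟨0, hH⟩⟩
  set s : Fin H → ℝ := fun i => ∑ j ∈ range i, δ j
  obtain ⟨x, ⟨hpos, hprod⟩, hx_unique⟩ := existsUnique_prod_add_eq s hC
  refine ⟨fun i => x + s i, ⟨hpos, hprod, fun i h => ?_⟩, fun β ⟨hβpos, hβprod, hβ⟩ => ?_⟩
  · simp only [s, sum_range_succ]
    ring
  · have hβ_eq : β = fun i => β ⟨0, hH⟩ + s i :=
      funext (Fin.eq_zero_add_sum_range_of_sub_eq hβ)
    rw [hβ_eq] at hβpos hβprod ⊢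
    rw [hx_unique _ ⟨hβpos, hβprod⟩]
end

section
/- Let μ be multilinear in H arguments and let θ = (w₁,...,w_H). If θ' = (λ₁w₁,...,λ_H w_H) with each λ_i ∈ {−1,+1}, then the neural tangent kernel K_{θ'} = J_{θ'}J_{θ'}^T equals K_θ = J_θ J_θ^T, where J_θ is the Jacobian of μ at θ. -/
/-- For a multilinear μ, flipping signs of the arguments (λᵢ ∈ {±1}) does not
change the neural tangent kernel K_θ = Σᵢ Jᵢ Jᵢᵀ, where Jᵢ = ∂μ/∂wᵢ is the i-th block
of the Jacobian of μ at θ (and Jᵢᵀ is its adjoint). -/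
theorem stmt_5 (H : ℕ) (k : Fin H → ℕ) (m : ℕ)
    (μ : ContinuousMultilinearMap ℝ (fun i : Fin H => EuclideanSpace ℝ (Fin (k i)))
      (EuclideanSpace ℝ (Fin m)))
    (θ : ∀ i, EuclideanSpace ℝ (Fin (k i)))
    (lam : Fin H → ℝ) (hlam : ∀ i, lam i = 1 ∨ lam i = -1) :
    (∑ i, (μ.toContinuousLinearMap (fun j => lam j • θ j) i) ∘L
        ContinuousLinearMap.adjoint (μ.toContinuousLinearMap (fun j => lam j • θ j) i))
      = ∑ i, (μ.toContinuousLinearMap θ i) ∘L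
          ContinuousLinearMap.adjoint (μ.toContinuousLinearMap θ i) := by
  refine Finset.sum_congr rfl fun i _ => ?_
  set c : ℝ := ∏ j, (if j = i then 1 else lam j) with hc
  have hkey : μ.toContinuousLinearMap (fun j => lam j • θ j) i
      = c • μ.toContinuousLinearMap θ i := by
    ext x
    simp only [ContinuousMultilinearMap.toContinuousLinearMap_apply,
      ContinuousLinearMap.smul_apply]
    have h1 : Function.update (fun j => lam j • θ j) i x
        = fun j => (if j = i then 1 else lam j) • Function.update θ i x j := by
      funext j
      by_cases h : j = i
      · subst h; simp
      · simp [Function.update_of_ne h, h]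
    rw [h1, μ.map_smul_univ]
  have hc2 : c * c = 1 := by
    rw [hc, ← Finset.prod_mul_distrib]
    refine Finset.prod_eq_one fun j _ => ?_
    by_cases h : j = i
    · simp [h]
    · rcases hlam j with h' | h' <;> simp [h, h']
  rw [hkey, ContinuousLinearMap.smul_comp]
  rw [map_smul]
  rw [ContinuousLinearMap.comp_smul, smul_smul, hc2, one_smul]
end

section
/- For the 1-dimensional convolution μ(a, b) = (a₀b₀, a₁b₀, a₂b₀ + a₀b₁, a₁b₁, a₂b₁) with a ∈ ℝ³, b ∈ ℝ², every point v = μ(a,b) in the image satisfies v₀v₃² + v₁²v₄ − v₁v₂v₃ = 0 and v₂² − 4v₀v₄ ≥ 0. -/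
/-!
Read `v = conv21 a b` as the coefficient vector of `V(t) = Σ vᵢ tⁱ`; then
`V(t) = (a₀ + a₁ t + a₂ t²)(b₀ + b₁ t²)`. With `s = t²`, the even part of `V` is
`v₀ + v₂ s + v₄ s² = (a₀ + a₂ s)(b₀ + b₁ s)` and the odd part is `t (v₁ + v₃ s) = t · a₁ (b₀ + b₁ s)`.
The even part splits into real linear factors, so its discriminant is a square; it shares the
factor `b₀ + b₁ s` with the odd part, so their resultant `v₀v₃² + v₁²v₄ − v₁v₂v₃` vanishes.
-/

/-- The 2-layer convolution parametrization map with filter sizes (3,2) and strides (2,1). -/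
def conv21 (a : Fin 3 → ℝ) (b : Fin 2 → ℝ) : Fin 5 → ℝ :=
  ![a 0 * b 0, a 1 * b 0, a 2 * b 0 + a 0 * b 1, a 1 * b 1, a 2 * b 1]

section CommRing

variable {R : Type*} [CommRing R]

theorem discrim_mul_linear (p₀ p₁ q₀ q₁ : R) :
    discrim (p₀ * q₀) (p₁ * q₀ + p₀ * q₁) (p₁ * q₁) = (p₁ * q₀ - p₀ * q₁) ^ 2 := by
  rw [discrim]
  ring

/-- The resultant of `c₀ + c₁ s + c₂ s²` and `m₀ + m₁ s` is `c₀ m₁² + m₀² c₂ − m₀ c₁ m₁`. -/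
theorem resultant_quadratic_linear_eq_zero_of_common_factor (p₀ p₁ q₀ q₁ k : R) :
    (p₀ * q₀) * (k * q₁) ^ 2 + (k * q₀) ^ 2 * (p₁ * q₁)
      - (k * q₀) * (p₁ * q₀ + p₀ * q₁) * (k * q₁) = 0 := by
  ring

end CommRing

/-- Every point v = μ(a,b) of the image satisfies
v₀v₃² + v₁²v₄ − v₁v₂v₃ = 0 and v₂² − 4v₀v₄ ≥ 0. -/
theorem stmt_6 (a : Fin 3 → ℝ) (b : Fin 2 → ℝ) (v : Fin 5 → ℝ) (hv : v = conv21 a b) :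
    v 0 * (v 3) ^ 2 + (v 1) ^ 2 * v 4 - v 1 * v 2 * v 3 = 0 ∧
    (v 2) ^ 2 - 4 * v 0 * v 4 ≥ 0 := by
  subst hv
  simp only [conv21, Matrix.cons_val]
  refine ⟨resultant_quadratic_linear_eq_zero_of_common_factor (a 0) (a 2) (b 0) (b 1) (a 1), ?_⟩
  have hdiscrim := discrim_mul_linear (a 0) (a 2) (b 0) (b 1)
  rw [discrim] at hdiscrim
  rw [hdiscrim]
  exact sq_nonneg _
end

section
/- For the map μ(a, b) = (a₀b₀, a₁b₀, a₂b₀ + a₀b₁, a₁b₁, a₂b₁), if v = μ(a,b) with v₁ ≠ 0 and v₃ ≠ 0, then (a, b) is uniquely determined up to scaling: there exists λ ≠ 0 with a = λ·(v₀/v₁, 1, v₄/v₃) and b = (1/λ)·(v₁, v₃). -/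
section Normalize

variable {K : Type*} [Field K]

theorem eq_smul_normalize_middle (a : Fin 3 → K) (ha : a 1 ≠ 0) :
    a = a 1 • ![a 0 / a 1, 1, a 2 / a 1] := by
  ext i
  fin_cases i <;> simp [mul_div_cancel₀, ha]

theorem eq_inv_smul_smul_vec2 (b : Fin 2 → K) {l : K} (hl : l ≠ 0) :
    b = l⁻¹ • ![l * b 0, l * b 1] := by
  ext i
  fin_cases i <;> simp [hl]

end Normalize

/-- If v = μ(a,b) with v₁ ≠ 0 and v₃ ≠ 0, then (a,b) is determined up to
scaling: a = λ·(v₀/v₁, 1, v₄/v₃) and b = (1/λ)·(v₁, v₃) for some λ ≠ 0. -/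
theorem stmt_7 (a : Fin 3 → ℝ) (b : Fin 2 → ℝ) (v : Fin 5 → ℝ) (hv : v = conv21 a b)
    (h1 : v 1 ≠ 0) (h3 : v 3 ≠ 0) :
    ∃ l : ℝ, l ≠ 0 ∧ a = l • ![v 0 / v 1, 1, v 4 / v 3] ∧ b = l⁻¹ • ![v 1, v 3] := by
  subst hv
  simp only [conv21, Matrix.cons_val] at h1 h3 ⊢
  obtain ⟨ha1, hb0⟩ := mul_ne_zero_iff.mp h1
  have hb1 : b 1 ≠ 0 := right_ne_zero_of_mul h3
  refine ⟨a 1, ha1, ?_, eq_inv_smul_smul_vec2 b ha1⟩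
  rw [mul_div_mul_right _ _ hb0, mul_div_mul_right _ _ hb1]
  exact eq_smul_normalize_middle a ha1
end

section
/- Let μ(a,b) = (a₀b₀, a₁b₀, a₂b₀ + a₀b₁, a₁b₁, a₂b₁) (strides (2,1)). For a = (1,0,2), b = (2,1) and a' = (2,0,1), b' = (1,2), we have μ(a,b) = μ(a',b') and ‖b‖² − ‖a‖² = ‖b'‖² − ‖a'‖² = 0, but the neural tangent kernels K_{(a,b)} and K_{(a',b')} are distinct 5×5 matrices. -/
open Matrix

/-- The Jacobian block of `conv21` with respect to the first filter `a`
(columns are μ(e_m, b), as μ is linear in `a`). -/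
def J1of21 (b : Fin 2 → ℝ) : Matrix (Fin 5) (Fin 3) ℝ :=
  fun i m => conv21 (Pi.single m 1) b i

/-- The Jacobian block of `conv21` with respect to the second filter `b`. -/
def J2of21 (a : Fin 3 → ℝ) : Matrix (Fin 5) (Fin 2) ℝ :=
  fun i m => conv21 a (Pi.single m 1) i

/-- The neural tangent kernel K_θ = J_θ J_θᵀ = J₁J₁ᵀ + J₂J₂ᵀ of `conv21` at θ = (a,b). -/
def ntk21 (a : Fin 3 → ℝ) (b : Fin 2 → ℝ) : Matrix (Fin 5) (Fin 5) ℝ :=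
  J1of21 b * (J1of21 b)ᵀ + J2of21 a * (J2of21 a)ᵀ

/-- The balanced pairs (a,b) = ((1,0,2),(2,1)) and (a',b') = ((2,0,1),(1,2))
have the same end-to-end filter and the same invariant δ = 0, but distinct NTKs. -/
theorem stmt_10 (a a' : Fin 3 → ℝ) (b b' : Fin 2 → ℝ)
    (ha : a = ![1, 0, 2]) (hb : b = ![2, 1])
    (ha' : a' = ![2, 0, 1]) (hb' : b' = ![1, 2]) :
    conv21 a b = conv21 a' b' ∧
    b 0 ^ 2 + b 1 ^ 2 - (a 0 ^ 2 + a 1 ^ 2 + a 2 ^ 2) = 0 ∧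
    b' 0 ^ 2 + b' 1 ^ 2 - (a' 0 ^ 2 + a' 1 ^ 2 + a' 2 ^ 2) = 0 ∧
    ntk21 a b ≠ ntk21 a' b' := by
  subst ha hb ha' hb'
  refine ⟨?_, by norm_num [Matrix.cons_val_two, Matrix.vecHead, Matrix.vecTail], by norm_num [Matrix.cons_val_two, Matrix.vecHead, Matrix.vecTail], ?_⟩
  · funext i
    fin_cases i <;> simp [conv21] <;> norm_num
  · intro h
    have := congrFun (congrFun h 1) 1
    simp [ntk21, J1of21, J2of21, conv21, Matrix.mul_apply, Fin.sum_univ_succ,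
      Pi.single_apply] at this
    norm_num at this
end

section
/- For d=2, the matrices V₂ = diag(1,2), V₁ = diag(1,1/2), U₂ = [[0,2],[1,0]], U₁ = [[0,1],[1/2,0]] satisfy U₂U₁ = V₂V₁ = I and V₂ᵀV₂ − V₁V₁ᵀ = U₂ᵀU₂ − U₁U₁ᵀ = diag(0,15/4), yet there exists a 2×2 matrix Z such that Z V₁ᵀV₁ + V₂V₂ᵀ Z ≠ Z U₁ᵀU₁ + U₂U₂ᵀ Z. -/
open Matrix

lemma t2 (a b c d : ℝ) : (!![a, b; c, d])ᵀ = !![a, c; b, d] := by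
  ext i j; fin_cases i <;> fin_cases j <;> simp

/-- The pairs (V₁,V₂) and (U₁,U₂) have the same product (the identity) and
the same invariant Δ₁ = diag(0, 15/4), but their neural tangent kernels
Z ↦ Z W₁ᵀW₁ + W₂W₂ᵀ Z differ. -/
theorem stmt_11 (V₂ V₁ U₂ U₁ : Matrix (Fin 2) (Fin 2) ℝ)
    (hV₂ : V₂ = !![1, 0; 0, 2]) (hV₁ : V₁ = !![1, 0; 0, 1/2])
    (hU₂ : U₂ = !![0, 2; 1, 0]) (hU₁ : U₁ = !![0, 1; 1/2, 0]) :
    U₂ * U₁ = 1 ∧ V₂ * V₁ = 1 ∧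
    V₂ᵀ * V₂ - V₁ * V₁ᵀ = !![0, 0; 0, 15/4] ∧
    U₂ᵀ * U₂ - U₁ * U₁ᵀ = !![0, 0; 0, 15/4] ∧
    ∃ Z : Matrix (Fin 2) (Fin 2) ℝ,
      Z * V₁ᵀ * V₁ + V₂ * V₂ᵀ * Z ≠ Z * U₁ᵀ * U₁ + U₂ * U₂ᵀ * Z := by
  subst hV₂ hV₁ hU₂ hU₁
  refine ⟨by ext i j; fin_cases i <;> fin_cases j <;> simp [Matrix.mul_apply, Fin.sum_univ_two, Matrix.one_apply] <;> norm_num, by ext i j; fin_cases i <;> fin_cases j <;> simp [Matrix.mul_apply, Fin.sum_univ_two, Matrix.one_apply] <;> norm_num, by simp only [t2]; ext i j; fin_cases i <;> fin_cases j <;> simp [Matrix.mul_apply, Fin.sum_univ_two, Matrix.one_apply] <;> norm_num, by simp only [t2]; ext i j; fin_cases i <;> fin_cases j <;> simp [Matrix.mul_apply, Fin.sum_univ_two, Matrix.one_apply] <;> norm_num, ⟨!![0, 1; 0, 0], ?_⟩⟩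
  intro h
  have := congrFun (congrFun h 0) 1
  simp only [t2] at this
  simp [Matrix.mul_apply, Fin.sum_univ_two] at this
  norm_num at this
end

section
/- Along the gradient flow W_l'(t) = −∇_{W_l} L(W₁(t),...,W_H(t)) of L(W₁,...,W_H) = ℓ(W_H⋯W₁) for a differentiable ℓ on matrices, the matrices Δ_i(t) = W_{i+1}(t)ᵀW_{i+1}(t) − W_i(t)W_i(t)ᵀ are constant in t for each i = 1,...,H−1. -/
open Matrix

/-- Along the gradient flow W_l'(t) = −∇_{W_l} L of L(W₁,...,W_H) = ℓ(W_H⋯W₁),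
the matrices Δ_i(t) = W_{i+1}(t)ᵀW_{i+1}(t) − W_i(t)W_i(t)ᵀ are constant in t.
Layers are indexed l = 0,...,H-1 here, with `W t l` of shape d_{l+1} × d_l.
`G t` is the gradient ∇ℓ(W_H⋯W₁) at time t, `A t l` is the partial product of the layers
above level l (so `A t l` = W_{H-1}⋯W_l, mapping level l to level H) and `B t l` = W_{l-1}⋯W_0
the one below, so that ∇_{W_l} L = (A t (l+1))ᵀ * G t * (B t l)ᵀ; the ODE is stated entrywise. -/
theorem stmt_16 (H : ℕ) (hH : 1 ≤ H) (d : ℕ → ℕ)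
    (W : ℝ → ∀ l : ℕ, Matrix (Fin (d (l + 1))) (Fin (d l)) ℝ)
    (G : ℝ → Matrix (Fin (d H)) (Fin (d 0)) ℝ)
    (A : ℝ → ∀ l : ℕ, Matrix (Fin (d H)) (Fin (d l)) ℝ)
    (B : ℝ → ∀ l : ℕ, Matrix (Fin (d l)) (Fin (d 0)) ℝ)
    (hAtop : ∀ t, A t H = 1)
    (hA : ∀ t, ∀ l, l < H → A t l = A t (l + 1) * W t l)
    (hB0 : ∀ t, B t 0 = 1)
    (hB : ∀ t, ∀ l, l < H → B t (l + 1) = W t l * B t l)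
    (hflow : ∀ t : ℝ, ∀ l, l < H → ∀ i j,
      HasDerivAt (fun s => W s l i j) (-((A t (l + 1))ᵀ * G t * (B t l)ᵀ) i j) t) :
    ∀ i, i + 1 < H → ∀ t : ℝ,
      (W t (i + 1))ᵀ * W t (i + 1) - W t i * (W t i)ᵀ
        = (W 0 (i + 1))ᵀ * W 0 (i + 1) - W 0 i * (W 0 i)ᵀ := by

  intro i hi t
  have hiH : i < H := Nat.lt_of_succ_lt hi
  ext a b
  -- entrywise function
  set g : ℝ → ℝ := fun s =>
    (∑ k, W s (i + 1) k a * W s (i + 1) k b) - ∑ k, W s i a k * W s i b k with hg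
  have hgeq : ∀ s : ℝ, ((W s (i + 1))ᵀ * W s (i + 1) - W s i * (W s i)ᵀ) a b = g s := by
    intro s
    simp [g, Matrix.sub_apply, Matrix.mul_apply, Matrix.transpose_apply]
  have hderiv : ∀ s : ℝ, HasDerivAt g 0 s := by
    intro s
    set D2 := -((A s (i + 1 + 1))ᵀ * G s * (B s (i + 1))ᵀ) with hD2
    set D1 := -((A s (i + 1))ᵀ * G s * (B s i)ᵀ) with hD1
    have h2 : HasDerivAt (fun u => ∑ k, W u (i + 1) k a * W u (i + 1) k b)
        (∑ k, (D2 k a * W s (i + 1) k b + W s (i + 1) k a * D2 k b)) s := by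
      apply HasDerivAt.fun_sum
      intro k _
      exact (hflow s (i + 1) hi k a).mul (hflow s (i + 1) hi k b)
    have h1 : HasDerivAt (fun u => ∑ k, W u i a k * W u i b k)
        (∑ k, (D1 a k * W s i b k + W s i a k * D1 b k)) s := by
      apply HasDerivAt.fun_sum
      intro k _
      exact (hflow s i hiH a k).mul (hflow s i hiH b k)
    have key : (D2ᵀ * W s (i + 1) + (W s (i + 1))ᵀ * D2)
        - (D1 * (W s i)ᵀ + W s i * D1ᵀ) = 0 := by
      rw [hD1, hD2, hA s (i + 1) hi, hB s i hiH]
      simp only [Matrix.transpose_neg, Matrix.transpose_mul, Matrix.transpose_transpose,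
        Matrix.neg_mul, Matrix.mul_neg, Matrix.mul_assoc]
      abel
    have hval : (∑ k, (D2 k a * W s (i + 1) k b + W s (i + 1) k a * D2 k b))
        - (∑ k, (D1 a k * W s i b k + W s i a k * D1 b k))
        = ((D2ᵀ * W s (i + 1) + (W s (i + 1))ᵀ * D2)
            - (D1 * (W s i)ᵀ + W s i * D1ᵀ)) a b := by
      simp [Matrix.sub_apply, Matrix.add_apply, Matrix.mul_apply, Matrix.transpose_apply,
        Finset.sum_add_distrib]
    have := (h2.fun_sub h1)
    rw [hval, key] at this
    simpa using this
  have hconst : g t = g 0 := by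
    have := is_const_of_deriv_eq_zero (f := g)
      (fun x => (hderiv x).differentiableAt) (fun x => (hderiv x).deriv) t 0
    exact this
  rw [hgeq, hgeq, hconst]
end

section
/- For θ = (w₁,...,w_H) with all ‖w_i‖ > 0, the set T = {(ẇ₁,...,ẇ_H) : ⟨w_{i+1}, ẇ_{i+1}⟩ = ⟨w₁, ẇ₁⟩ for all i = 1,...,H−1} is a linear subspace of codimension H−1, and the only linear combination λ₁θ̇₁ + ⋯ + λ_{H-1}θ̇_{H-1} of the vectors θ̇_i = (0,...,0,−w_i, w_{i+1},0,...,0) (with −w_i in slot i and w_{i+1} in slot i+1) lying in T is the zero combination (all λ_i = 0). -/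
open RealInnerProductSpace

/-- For θ = (w₁,...,w_H) with all ‖wᵢ‖ > 0, the set
T = {u : ⟨w_{i+1}, u_{i+1}⟩ = ⟨w₁, u₁⟩ for all i} is a linear subspace of codimension H−1,
and the only linear combination Σ λᵢ θ̇ᵢ of the vectors
θ̇ᵢ = (0,...,0,−wᵢ,w_{i+1},0,...,0) lying in T is the zero combination.
(The combination is the tuple v with v_j = (−λ_j + λ_{j-1})·w_j, with the out-of-range λ's
treated as 0; indices are 0-based.) -/
theorem stmt_19 (H : ℕ) (hH : 2 ≤ H) (n : Fin H → ℕ)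
    (w : ∀ i, EuclideanSpace ℝ (Fin (n i))) (hw : ∀ i, 0 < ‖w i‖) :
    (∃ S : Submodule ℝ (∀ i, EuclideanSpace ℝ (Fin (n i))),
      (S : Set (∀ i, EuclideanSpace ℝ (Fin (n i)))) =
        {u | ∀ i : ℕ, ∀ h : i + 1 < H,
          ⟪w ⟨i + 1, h⟩, u ⟨i + 1, h⟩⟫ = ⟪w ⟨0, by omega⟩, u ⟨0, by omega⟩⟫} ∧
      Module.finrank ℝ S + (H - 1)
        = Module.finrank ℝ (∀ i, EuclideanSpace ℝ (Fin (n i)))) ∧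
    (∀ (lam : ℕ → ℝ) (v : ∀ i, EuclideanSpace ℝ (Fin (n i))),
      (∀ j : Fin H, v j =
        ((if (j : ℕ) + 1 < H then -(lam (j : ℕ)) else 0) +
         (if 1 ≤ (j : ℕ) then lam ((j : ℕ) - 1) else 0)) • w j) →
      (∀ i : ℕ, ∀ h : i + 1 < H,
        ⟪w ⟨i + 1, h⟩, v ⟨i + 1, h⟩⟫ = ⟪w ⟨0, by omega⟩, v ⟨0, by omega⟩⟫) →
      ∀ i : ℕ, i + 1 < H → lam i = 0) := by
  have h0 : (0:ℕ) < H := by omega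
  constructor
  · -- Part 1
    let f : Fin (H-1) → ((∀ i, EuclideanSpace ℝ (Fin (n i))) →ₗ[ℝ] ℝ) := fun k =>
      ((innerSL ℝ (w (⟨(k:ℕ)+1, by have := k.isLt; omega⟩ : Fin H))).toLinearMap.comp
        (LinearMap.proj (⟨(k:ℕ)+1, by have := k.isLt; omega⟩ : Fin H))) -
      ((innerSL ℝ (w (⟨0, h0⟩ : Fin H))).toLinearMap.comp
        (LinearMap.proj (⟨0, h0⟩ : Fin H)))
    let L : (∀ i, EuclideanSpace ℝ (Fin (n i))) →ₗ[ℝ] (Fin (H-1) → ℝ) := LinearMap.pi f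
    refine ⟨LinearMap.ker L, ?_, ?_⟩
    · ext u
      simp only [SetLike.mem_coe, LinearMap.mem_ker, Set.mem_setOf_eq, funext_iff,
        LinearMap.pi_apply, L, f, LinearMap.sub_apply, LinearMap.comp_apply,
        LinearMap.proj_apply, ContinuousLinearMap.coe_coe, innerSL_apply_apply, Pi.zero_apply,
        sub_eq_zero]
      constructor
      · intro hu i hi
        exact hu ⟨i, by omega⟩
      · intro hu k
        exact hu k (by have := k.isLt; omega)
    · have hsurj : LinearMap.range L = ⊤ := by
        rw [LinearMap.range_eq_top]
        intro c
        refine ⟨fun j => if h : (j:ℕ) < 1 then 0 else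
          (c ⟨(j:ℕ)-1, by have := j.isLt; omega⟩ / ‖w j‖^2) • w j, ?_⟩
        funext k
        simp only [L, LinearMap.pi_apply, f, LinearMap.sub_apply, LinearMap.comp_apply,
          LinearMap.proj_apply, ContinuousLinearMap.coe_coe, innerSL_apply_apply]
        rw [dif_neg (by simp), dif_pos (by simp)]
        have hk : (⟨(k:ℕ)+1-1, by have := k.isLt; omega⟩ : Fin (H-1)) = k := by
          ext; simp
        rw [hk, real_inner_smul_right, inner_zero_right, real_inner_self_eq_norm_sq,
          div_mul_cancel₀ _ (by exact (pow_pos (hw _) 2).ne'), sub_zero]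
      have hrk := LinearMap.finrank_range_add_finrank_ker L
      rw [hsurj, finrank_top] at hrk
      have hfin : Module.finrank ℝ (Fin (H-1) → ℝ) = H - 1 := by
        simp [Module.finrank_fintype_fun_eq_card]
      rw [hfin] at hrk
      omega
  · -- Part 2
    intro lam v hv hT
    set N := ‖w ⟨0, h0⟩‖^2 with hN
    have hNpos : 0 < N := pow_pos (hw _) 2
    have key : ∀ i : ℕ, ∀ h : i + 1 < H,
        ((if i+1+1 < H then -lam (i+1) else 0) + lam i) * ‖w ⟨i+1, h⟩‖^2
          = (-lam 0) * N := by
      intro i h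
      have e1 : v ⟨i+1, h⟩ = ((if i+1+1 < H then -lam (i+1) else 0) +
          (if 1 ≤ i+1 then lam (i+1-1) else 0)) • w ⟨i+1, h⟩ := hv ⟨i+1, h⟩
      rw [if_pos (by omega : 1 ≤ i+1), Nat.add_sub_cancel] at e1
      have e0 : v ⟨0, h0⟩ = ((if 0+1 < H then -lam 0 else 0) +
          (if 1 ≤ 0 then lam (0-1) else 0)) • w ⟨0, h0⟩ := hv ⟨0, h0⟩
      rw [if_pos (by omega : 0+1 < H), if_neg (by omega : ¬ 1 ≤ 0), add_zero] at e0
      have heq : ⟪w ⟨i+1, h⟩, v ⟨i+1, h⟩⟫ = ⟪w ⟨0, h0⟩, v ⟨0, h0⟩⟫ := hT i h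
      rw [e1, e0, real_inner_smul_right, real_inner_smul_right,
        real_inner_self_eq_norm_sq, real_inner_self_eq_norm_sq] at heq
      exact heq
    have claim : ∀ i : ℕ, i + 1 < H → ∃ c : ℝ, 0 < c ∧ lam i = lam 0 * c := by
      intro i
      induction i with
      | zero => exact fun _ => ⟨1, one_pos, (mul_one _).symm⟩
      | succ i ih =>
        intro h
        obtain ⟨c, hc, hlam⟩ := ih (by omega)
        have hk := key i (by omega)
        rw [if_pos (by omega), hlam] at hk
        have hApos : 0 < ‖w (⟨i+1, by omega⟩ : Fin H)‖^2 := pow_pos (hw _) 2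
        refine ⟨c + N / ‖w (⟨i+1, by omega⟩ : Fin H)‖^2,
          add_pos hc (div_pos hNpos hApos), ?_⟩
        rw [mul_add, ← mul_div_assoc, add_div' _ _ _ hApos.ne', eq_div_iff hApos.ne']
        linear_combination -hk
    obtain ⟨c, hc, hlam⟩ := claim (H-2) (by omega)
    have hk := key (H-2) (by omega)
    rw [if_neg (by omega), hlam] at hk
    have hApos : 0 < ‖w (⟨H-2+1, by omega⟩ : Fin H)‖^2 := pow_pos (hw _) 2
    have hfac : lam 0 * (c * ‖w (⟨H-2+1, by omega⟩ : Fin H)‖^2 + N) = 0 := by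
      linear_combination hk
    have h00 : lam 0 = 0 := by
      rcases mul_eq_zero.mp hfac with h' | h'
      · exact h'
      · nlinarith [mul_pos hc hApos]
    intro i hi
    obtain ⟨c', _, hlam'⟩ := claim i hi
    rw [hlam', h00, zero_mul]
end
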